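/- arXiv:1612.02873 — 3 statements merged into one kernel-verified Lean document; each statement's English description precedes it below -/
import Mathlib

section
/- Let (X, 𝒳, μ, T) be a weakly mixing PID invertible measure-preserving transformation of a probability space. Then for every integer n ≠ 0, the system (X, 𝒳, μ, Tⁿ) is also PID. -/
/-!
Let `m = |n|` and let `λ` be a pairwise independent `d`-fold self-joining invariant under the
diagonal action of `T^m`. The Cesàro average of `λ, T_* λ, …, T^(m-1)_* λ` is a `T`-invariant
pairwise independent self-joining, so it is `μ^d` by PID; hence `λ ≪ μ^d`. PID and weak mixing
make the diagonal action of `T` on `μ^d` ergodic: the normalized restriction of `μ^d` to an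
invariant set is again a pairwise independent self-joining, whose one- and two-dimensional
marginals are forced by the ergodicity of `T` and `T × T`. Applied with `2d` factors this shows
that the diagonal action is even weakly mixing, so its `m`-th power is ergodic, and an invariant
probability measure absolutely continuous with respect to an ergodic one coincides with it.
Negative `n` reduce to positive ones, since PID passes to inverses.
-/

open MeasureTheory Filter

/-- A system `(X, μ, T)` is *pairwise independently determined* (PID) if for every `d ≥ 3`,
every pairwise independent `d`-fold self-joining of the system is the product measure `μ^d`. -/
def IsPID {X : Type*} [MeasurableSpace X] (μ : Measure X) (T : X → X) : Prop :=
  ∀ d : ℕ, 3 ≤ d → ∀ lam : Measure (Fin d → X), IsProbabilityMeasure lam →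
    Measure.map (fun x i => T (x i)) lam = lam →
    (∀ i : Fin d, Measure.map (fun x => x i) lam = μ) →
    (∀ i j : Fin d, i ≠ j → Measure.map (fun x => (x i, x j)) lam = μ.prod μ) →
    lam = Measure.pi (fun _ => μ)

open Set Function ProbabilityTheory
open scoped ENNReal

theorem Finset.sum_range_shift_of_eq {M : Type*} [AddCommMonoid M] {g : ℕ → M} {m : ℕ}
    (h : g m = g 0) : ∑ k ∈ Finset.range m, g (k + 1) = ∑ k ∈ Finset.range m, g k := by
  cases m with
  | zero => simp
  | succ m => rw [Finset.sum_range_succ, Finset.sum_range_succ', h, add_comm]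

theorem Function.iterate_pi_map {ι α : Type*} (f : α → α) (m : ℕ) :
    (fun (x : ι → α) i => f (x i))^[m] = fun x i => f^[m] (x i) := by
  funext x i
  exact (Semiconj.iterate_right (f := fun y : ι → α => y i) (fun _ => rfl) m) x

namespace MeasureTheory

variable {α β : Type*} [MeasurableSpace α] [MeasurableSpace β]

theorem Measure.map_finsetSum {ι : Type*} {f : α → β} (hf : Measurable f) (s : Finset ι)
    (ν : ι → Measure α) : (∑ k ∈ s, ν k).map f = ∑ k ∈ s, (ν k).map f := by
  simp only [← Measure.mapₗ_apply_of_measurable hf]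
  exact _root_.map_sum (Measure.mapₗ f) ν s

theorem measure_prod_setOf_eq_pos {μ : Measure α} [SFinite μ] [NeZero μ] {γ : Type*}
    [Countable γ] (g : α → γ) : 0 < (μ.prod μ) {p | g p.1 = g p.2} := by
  obtain ⟨c, hc⟩ : ∃ c, μ (g ⁻¹' {c}) ≠ 0 := by
    by_contra! h
    refine NeZero.ne μ (Measure.measure_univ_eq_zero.1 (measure_mono_null ?_
      (measure_iUnion_null h)))
    exact fun x _ => mem_iUnion.2 ⟨g x, rfl⟩
  calc 0 < μ (g ⁻¹' {c}) * μ (g ⁻¹' {c}) := ENNReal.mul_pos hc hc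
    _ = (μ.prod μ) ((g ⁻¹' {c}) ×ˢ (g ⁻¹' {c})) := (Measure.prod_prod _ _).symm
    _ ≤ (μ.prod μ) {p | g p.1 = g p.2} :=
      measure_mono fun p hp => (show g p.1 = c from hp.1).trans hp.2.symm

/- If `f^[m] ⁻¹' s = s`, the pairs whose itineraries through `s` agree form an
`f × f`-invariant set. It has positive measure because the itineraries are `m`-periodic, so
there are only finitely many of them. -/
theorem Ergodic.iterate_of_prodMap {μ : Measure α} [IsProbabilityMeasure μ] {f : α → α}
    (hf : MeasurePreserving f μ μ) (h : Ergodic (Prod.map f f) (μ.prod μ)) {m : ℕ}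
    (hm : m ≠ 0) : Ergodic f^[m] μ := by
  refine ⟨hf.iterate m, ⟨fun s hs hinv => ?_⟩⟩
  have hshift (x : α) (k : ℕ) : f^[k + m] x ∈ s ↔ f^[k] x ∈ s := by
    rw [add_comm, iterate_add_apply, ← mem_preimage, hinv]
  have hmod (x : α) (k : ℕ) : f^[k] x ∈ s ↔ f^[k % m] x ∈ s := by
    conv_lhs => rw [← Nat.mod_add_div k m]
    induction k / m with
    | zero => rfl
    | succ q ih => rw [Nat.mul_succ, ← add_assoc, hshift, ih]
  set S : Set (α × α) := {p | ∀ k, f^[k] p.1 ∈ s ↔ f^[k] p.2 ∈ s}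
  have hSm : MeasurableSet S := by
    have hfk (k : ℕ) : Measurable f^[k] := (hf.iterate k).measurable
    simp only [S, ofPred_forall]
    exact MeasurableSet.iInter fun k => Measurable.setOf (by fun_prop)
  have hSinv : Prod.map f f ⁻¹' S = S := by
    ext ⟨x, y⟩
    simp only [S, mem_preimage, mem_ofPred_eq, Prod.map_apply, ← iterate_succ_apply]
    refine ⟨fun H k => ?_, fun H k => H (k + 1)⟩
    obtain ⟨j, rfl⟩ := Nat.exists_eq_add_of_le' (Nat.pos_of_ne_zero hm)
    rw [← hshift x, ← hshift y, ← add_assoc]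
    exact H (k + j)
  have hSpos : 0 < (μ.prod μ) S := by
    refine (measure_prod_setOf_eq_pos fun x (k : Fin m) => f^[k] x ∈ s).trans_le
      (measure_mono fun p hp k => ?_)
    rw [hmod p.1, hmod p.2]
    exact iff_of_eq (congrFun hp ⟨k % m, Nat.mod_lt k (Nat.pos_of_ne_zero hm)⟩)
  rw [eventuallyConst_set', ae_eq_empty, ae_eq_univ, ← mul_eq_zero, ← Measure.prod_prod]
  refine measure_mono_null (fun p hp (hpS : p ∈ S) => hp.2 ((hpS 0).1 hp.1)) ?_
  exact (h.measure_self_or_compl_eq_zero hSm hSinv).resolve_left hSpos.ne'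

theorem Ergodic.map_eq_map_of_semiconj {f : α → α} {f' : β → β} {g : α → β}
    {ν π : Measure α} [IsProbabilityMeasure ν] [IsProbabilityMeasure π] (hg : Measurable g)
    (hgf : Semiconj g f f') (herg : Ergodic f' (π.map g)) (hf : MeasurePreserving f ν ν)
    (hνπ : ν ≪ π) : ν.map g = π.map g :=
  haveI := Measure.isProbabilityMeasure_map (μ := ν) hg.aemeasurable
  haveI := Measure.isProbabilityMeasure_map (μ := π) hg.aemeasurable
  herg.eq_of_absolutelyContinuous (.of_semiconj ⟨hg, rfl⟩ hf hgf herg.measurable)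
    (hνπ.map hg)

theorem Measure.map_map_iterate_of_semiconj {f : α → α} {f' : β → β} {g : α → β}
    {ν : Measure α} {ρ : Measure β} (hg : Measurable g) (hf : Measurable f)
    (hgf : Semiconj g f f') (hf' : MeasurePreserving f' ρ ρ) (hν : ν.map g = ρ) (k : ℕ) :
    (ν.map f^[k]).map g = ρ := by
  rw [Measure.map_map hg (hf.iterate k), (hgf.iterate_right k).comp_eq,
    ← Measure.map_map (hf'.iterate k).measurable hg, hν, (hf'.iterate k).map_eq]

theorem MeasurePreserving.cond {f : α → α} {μ : Measure α} (hf : MeasurePreserving f μ μ)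
    {s : Set α} (hs : MeasurableSet s) (hfs : f ⁻¹' s = s) :
    MeasurePreserving f μ[|s] μ[|s] := by
  refine .smul_measure ?_ _
  simpa only [hfs] using hf.restrict_preimage hs

namespace Measure

noncomputable def orbitAverage (f : α → α) (m : ℕ) (ν : Measure α) : Measure α :=
  (m : ℝ≥0∞)⁻¹ • ∑ k ∈ Finset.range m, ν.map f^[k]

variable {f : α → α} {m : ℕ} {ν : Measure α}

theorem map_orbitAverage_self (hf : Measurable f) (hν : ν.map f^[m] = ν) :
    (orbitAverage f m ν).map f = orbitAverage f m ν := by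
  rw [orbitAverage, Measure.map_smul, map_finsetSum hf]
  congr 1
  simp only [map_map hf (hf.iterate _), ← iterate_succ']
  exact Finset.sum_range_shift_of_eq (g := fun k => ν.map f^[k])
    (by rw [hν, iterate_zero, Measure.map_id])

theorem map_orbitAverage {g : α → β} {ρ : Measure β} (hg : Measurable g) (hm : m ≠ 0)
    (h : ∀ k, (ν.map f^[k]).map g = ρ) : (orbitAverage f m ν).map g = ρ := by
  rw [orbitAverage, Measure.map_smul, map_finsetSum hg]
  simp only [h, Finset.sum_const, Finset.card_range, ← Nat.cast_smul_eq_nsmul ℝ≥0∞,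
    smul_smul]
  rw [ENNReal.inv_mul_cancel (by exact_mod_cast hm) (ENNReal.natCast_ne_top m), one_smul]

theorem isProbabilityMeasure_orbitAverage [IsProbabilityMeasure ν] (hf : Measurable f)
    (hm : m ≠ 0) : IsProbabilityMeasure (orbitAverage f m ν) := by
  constructor
  simp only [orbitAverage, Measure.smul_apply, Measure.finsetSum_apply,
    Measure.map_apply (hf.iterate _) MeasurableSet.univ, preimage_univ, measure_univ,
    Finset.sum_const, Finset.card_range, nsmul_eq_mul, mul_one, smul_eq_mul]
  exact ENNReal.inv_mul_cancel (by exact_mod_cast hm) (ENNReal.natCast_ne_top m)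

theorem absolutelyContinuous_orbitAverage (hm : m ≠ 0) : ν ≪ orbitAverage f m ν := by
  refine absolutelyContinuous_of_le_smul (c := m) ?_
  rw [orbitAverage, smul_smul,
    ENNReal.mul_inv_cancel (by exact_mod_cast hm) (ENNReal.natCast_ne_top m), one_smul]
  simpa using Finset.single_le_sum (f := fun k => ν.map f^[k]) (fun _ _ => Measure.zero_le _)
    (Finset.mem_range.2 (Nat.pos_of_ne_zero hm))

theorem map_pi_pair {ι X : Type*} [Fintype ι] [MeasurableSpace X] (μ : Measure X)
    [IsProbabilityMeasure μ] {i j : ι} (hij : i ≠ j) :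
    (Measure.pi fun _ : ι => μ).map (fun x => (x i, x j)) = μ.prod μ := by
  have hind := (iIndepFun_pi (μ := fun _ : ι => μ) (X := fun _ => id)
    fun _ => aemeasurable_id).indepFun hij
  rw [(indepFun_iff_map_prod_eq_prod_map_map (measurable_pi_apply i).aemeasurable
    (measurable_pi_apply j).aemeasurable).1 hind, (measurePreserving_eval _ i).map_eq,
    (measurePreserving_eval _ j).map_eq]

end Measure

end MeasureTheory

namespace IsPID

variable {X : Type*} [MeasurableSpace X] {μ : Measure X}

theorem inv {σ : Equiv.Perm X} (hσ : Measurable σ) (hσ' : Measurable ⇑σ⁻¹)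
    (hpid : IsPID μ σ) : IsPID μ ⇑σ⁻¹ := by
  intro d hd lam hprob hinv hmarg hpair
  refine hpid d hd lam hprob ?_ hmarg hpair
  conv_lhs => rw [← hinv]
  rw [Measure.map_map (by fun_prop) (by fun_prop)]
  simp [Function.comp_def]

variable [IsProbabilityMeasure μ] {T : X → X}

theorem ergodic_pi (hT : MeasurePreserving T μ μ) (hwm : Ergodic (Prod.map T T) (μ.prod μ))
    (hpid : IsPID μ T) {d : ℕ} (hd : 3 ≤ d) :
    Ergodic (fun (x : Fin d → X) i => T (x i)) (Measure.pi fun _ => μ) := by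
  set π : Measure (Fin d → X) := Measure.pi fun _ => μ
  have hTd : MeasurePreserving (fun (x : Fin d → X) i => T (x i)) π π :=
    measurePreserving_pi _ _ fun _ => hT
  have hTerg : Ergodic T μ := by simpa using hwm.iterate_of_prodMap hT one_ne_zero
  refine ⟨hTd, ⟨fun s hs hinv => ?_⟩⟩
  rw [eventuallyConst_set', ae_eq_empty, ae_eq_univ]
  by_contra! hs0
  have hprob := cond_isProbabilityMeasure hs0.1
  have hcond : MeasurePreserving _ π[|s] π[|s] := hTd.cond hs hinv
  have hmarg (i : Fin d) : π[|s].map (fun x => x i) = μ := by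
    have hπ := (measurePreserving_eval (fun _ => μ) i).map_eq
    rw [Ergodic.map_eq_map_of_semiconj (measurable_pi_apply i) (g := fun x : Fin d → X => x i)
      (f' := T) (fun _ => rfl) (hπ ▸ hTerg) hcond cond_absolutelyContinuous, hπ]
  have hpair (i j : Fin d) (hij : i ≠ j) : π[|s].map (fun x => (x i, x j)) = μ.prod μ := by
    have hπ := Measure.map_pi_pair μ hij
    rw [Ergodic.map_eq_map_of_semiconj (by fun_prop) (g := fun x : Fin d → X => (x i, x j))
      (f' := Prod.map T T) (fun _ => rfl) (hπ ▸ hwm) hcond cond_absolutelyContinuous, hπ]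
  have hcompl : π[|s] sᶜ = 0 := by simp [cond_apply hs]
  rw [hpid d hd _ hprob hcond.map_eq hmarg hpair] at hcompl
  exact hs0.2 hcompl

theorem ergodic_prodMap_pi (hT : MeasurePreserving T μ μ)
    (hwm : Ergodic (Prod.map T T) (μ.prod μ)) (hpid : IsPID μ T) {d : ℕ} (hd : 3 ≤ d) :
    Ergodic (Prod.map (fun (x : Fin d → X) i => T (x i)) (fun x i => T (x i)))
      ((Measure.pi fun _ : Fin d => μ).prod (Measure.pi fun _ : Fin d => μ)) := by
  have hsplit : MeasurePreserving
      (MeasurableEquiv.sumPiEquivProdPi (fun _ : Fin d ⊕ Fin d => X) ∘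
        (MeasurableEquiv.piCongrLeft (fun _ : Fin (d + d) => X) finSumFinEquiv).symm)
      (Measure.pi fun _ : Fin (d + d) => μ)
      ((Measure.pi fun _ => μ).prod (Measure.pi fun _ => μ)) :=
    (measurePreserving_sumPiEquivProdPi _).comp
      ((measurePreserving_piCongrLeft (fun _ => μ) finSumFinEquiv).symm _)
  have hTd : Measurable fun (x : Fin d → X) i => T (x i) :=
    (measurePreserving_pi _ _ fun _ => hT).measurable
  exact hsplit.ergodic_of_ergodic_semiconj (ergodic_pi hT hwm hpid (by omega))
    (hTd.prodMap hTd) fun _ => rfl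

theorem iterate (hT : MeasurePreserving T μ μ) (hwm : Ergodic (Prod.map T T) (μ.prod μ))
    (hpid : IsPID μ T) {m : ℕ} (hm : m ≠ 0) : IsPID μ T^[m] := by
  intro d hd lam _ hinv hmarg hpair
  set Td := fun (x : Fin d → X) i => T (x i)
  set π : Measure (Fin d → X) := Measure.pi fun _ => μ
  have hTd : MeasurePreserving Td π π := measurePreserving_pi _ _ fun _ => hT
  rw [← iterate_pi_map] at hinv
  have havg : Measure.orbitAverage Td m lam = π := by
    refine hpid d hd _ (Measure.isProbabilityMeasure_orbitAverage hTd.measurable hm)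
      (Measure.map_orbitAverage_self hTd.measurable hinv) (fun i => ?_) (fun i j hij => ?_)
    · exact Measure.map_orbitAverage (measurable_pi_apply i) hm
        (Measure.map_map_iterate_of_semiconj (measurable_pi_apply i) hTd.measurable
          (fun _ => rfl) hT (hmarg i))
    · exact Measure.map_orbitAverage (by fun_prop) hm
        (Measure.map_map_iterate_of_semiconj (by fun_prop) hTd.measurable
          (fun _ => rfl) (hT.prod hT) (hpair i j hij))
  have hac : lam ≪ π := havg ▸ Measure.absolutelyContinuous_orbitAverage hm
  exact ((ergodic_prodMap_pi hT hwm hpid hd).iterate_of_prodMap hTd hm).eq_of_absolutelyContinuous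
    ⟨hTd.measurable.iterate m, hinv⟩ hac

end IsPID

/-- Let `(X, 𝒳, μ, T)` be a weakly mixing PID invertible measure-preserving transformation of a
probability space. Then for every integer `n ≠ 0`, the system `(X, 𝒳, μ, Tⁿ)` is also PID. -/
theorem pid_zpow {X : Type*} [MeasurableSpace X] (μ : Measure X) [IsProbabilityMeasure μ]
    (T : Equiv.Perm X)
    (hT : MeasurePreserving T μ μ) (hT' : MeasurePreserving T.symm μ μ)
    (hwm : Ergodic (Prod.map ⇑T ⇑T) (μ.prod μ)) (hpid : IsPID μ ⇑T)
    (n : ℤ) (hn : n ≠ 0) :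
    IsPID μ ⇑(T ^ n) := by
  have hpow : IsPID μ ⇑(T ^ n.natAbs) := by
    rw [Equiv.Perm.coe_pow]
    exact hpid.iterate hT hwm (Int.natAbs_ne_zero.2 hn)
  rcases Int.natAbs_eq n with h | h
  · rwa [h, zpow_natCast]
  · rw [h, zpow_neg, zpow_natCast]
    refine hpow.inv ?_ ?_
    · rw [Equiv.Perm.coe_pow]
      exact hT.measurable.iterate _
    · rw [← inv_pow, Equiv.Perm.coe_pow]
      exact hT'.measurable.iterate _
end

section
/- Let (X, T) be a topological dynamical system on a compact metric space that is uniquely ergodic with unique invariant measure μ, and suppose (X, 𝒳, μ, T) is weakly mixing. Then for every n ∈ ℕ, the system (X, Tⁿ) is also uniquely ergodic (with the same unique invariant measure μ). -/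
/-!
Weak mixing implies total ergodicity: for a `Tⁿ`-invariant set `s`, the pattern
`x ↦ (T^[j] x ∈ s)_{j < n}` intertwines `T` with a cyclic rotation of patterns, so having the same
pattern is a `T × T`-invariant set of pairs. It has positive measure since there are only finitely
many patterns, hence it is conull, so the pattern (and with it `s`) is a.e. constant.

If `ν` is `Tⁿ`-invariant, the average `(1/n) ∑_{j<n} T^j_* ν` is `T`-invariant, hence equal to `μ`
by unique ergodicity. Thus `ν ≪ μ`, and an absolutely continuous invariant probability measure of
the ergodic system `(X, μ, Tⁿ)` is `μ` itself.
-/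

open MeasureTheory Filter Function Set Finset

section

variable {X : Type*} [MeasurableSpace X] {μ : Measure X} {T : X → X}

theorem PreErgodic.eventuallyConst_of_semiconj_of_prodMap [NeZero μ] [SFinite μ]
    {F : Type*} [Countable F] [MeasurableSpace F] [MeasurableSingletonClass F]
    (h : PreErgodic (Prod.map T T) (μ.prod μ)) {f : X → F} (hf : Measurable f) {e : F → F}
    (he : Injective e) (hfe : Semiconj f T e) : EventuallyConst f (ae μ) := by
  set A := {p : X × X | f p.1 = f p.2}
  have hA : MeasurableSet A :=
    measurableSet_eq_fun (hf.comp measurable_fst) (hf.comp measurable_snd)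
  have hA_inv : Prod.map T T ⁻¹' A = A := by
    ext p
    simp [A, hfe.eq, he.eq_iff]
  obtain ⟨c, hc⟩ : ∃ c, μ (f ⁻¹' {c}) ≠ 0 := by
    by_contra! h
    rw [← measure_iUnion_null_iff, ← preimage_iUnion, iUnion_of_singleton, preimage_univ] at h
    exact NeZero.ne μ (Measure.measure_univ_eq_zero.mp h)
  have hA_pos : (μ.prod μ) A ≠ 0 := by
    refine ne_bot_of_le_ne_bot ?_ (measure_mono (s := (f ⁻¹' {c}) ×ˢ (f ⁻¹' {c})) ?_)
    · rw [Measure.prod_prod]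
      exact mul_ne_zero hc hc
    · rintro ⟨x, y⟩ ⟨hx, hy⟩
      exact hx.trans hy.symm
  have hA_ae : ∀ᵐ p ∂(μ.prod μ), p ∈ A :=
    (h.ae_mem_or_ae_notMem hA hA_inv).resolve_right
      fun h' => hA_pos (measure_eq_zero_iff_ae_notMem.mpr h')
  obtain ⟨x, hx⟩ := (Measure.ae_ae_of_ae_prod hA_ae).exists
  exact (EventuallyConst.const (f x)).congr (hx.mono fun y hy => hy)

theorem PreErgodic.iterate_of_prodMap [NeZero μ] [SFinite μ]
    (h : PreErgodic (Prod.map T T) (μ.prod μ)) (hT : Measurable T) {n : ℕ} (hn : 0 < n) :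
    PreErgodic T^[n] μ where
  aeconst_set s hs hinv := by
    obtain ⟨m, rfl⟩ := Nat.exists_eq_add_one_of_ne_zero hn.ne'
    have hper : ∀ x, Periodic (fun k => T^[k] x ∈ s) (m + 1) := fun x k => by
      dsimp only
      rw [add_comm, iterate_add_apply, ← mem_preimage (s := s), hinv]
    set f : X → Fin (m + 1) → Prop := fun x j => T^[j] x ∈ s
    have hf : Measurable f :=
      measurable_pi_lambda _ fun j => measurableSet_setOfPred.mp (hT.iterate j hs)
    have hfe : Semiconj f T (· ∘ finRotate (m + 1)) := fun x => funext fun j => by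
      simp only [f, comp_apply, finRotate_apply, Fin.val_add_one, ← iterate_succ_apply]
      split_ifs with hj
      · simpa only [hj, Fin.val_last, zero_add, Nat.succ_eq_add_one] using hper x 0
      · rfl
    exact (h.eventuallyConst_of_semiconj_of_prodMap hf
      (finRotate _).surjective.injective_comp_right hfe).apply 0

theorem map_sum_range_map_iterate (hT : Measurable T) {ν : Measure X} {n : ℕ}
    (hν : ν.map T^[n] = ν) :
    (∑ j ∈ range n, ν.map T^[j]).map T = ∑ j ∈ range n, ν.map T^[j] := by
  rw [← Measure.mapₗ_apply_of_measurable hT, map_sum]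
  simp_rw [Measure.mapₗ_apply_of_measurable hT, Measure.map_map hT (hT.iterate _),
    ← iterate_succ']
  cases n with
  | zero => rfl
  | succ m => rw [sum_range_succ, sum_range_succ', hν, iterate_zero, Measure.map_id]

theorem absolutelyContinuous_of_map_iterate_eq (hT : Measurable T)
    (huniq : ∀ ν : Measure X, IsProbabilityMeasure ν → ν.map T = ν → ν = μ)
    {ν : Measure X} [IsProbabilityMeasure ν] {n : ℕ} (hn : 0 < n) (hν : ν.map T^[n] = ν) :
    ν ≪ μ := by
  set S := ∑ j ∈ range n, ν.map T^[j]
  have hS_univ : S univ = n := by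
    simp [S, Measure.map_apply (hT.iterate _) MeasurableSet.univ]
  have hS_prob : IsProbabilityMeasure ((n : ENNReal)⁻¹ • S) := ⟨by
    rw [Measure.smul_apply, hS_univ, smul_eq_mul,
      ENNReal.inv_mul_cancel (Nat.cast_ne_zero.mpr hn.ne') (ENNReal.natCast_ne_top n)]⟩
  have hS : (n : ENNReal)⁻¹ • S = μ :=
    huniq _ hS_prob (by rw [Measure.map_smul, map_sum_range_map_iterate hT hν])
  have hνS : ν ≪ S := Measure.absolutelyContinuous_of_le <| by
    simpa using single_le_sum (f := fun j => ν.map T^[j]) (fun _ _ => Measure.zero_le _)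
      (mem_range.2 hn)
  exact hS ▸ hνS.trans (Measure.absolutelyContinuous_smul (ENNReal.inv_ne_zero.2
    (ENNReal.natCast_ne_top n)))

end

theorem uniquelyErgodic_iterate_general {X : Type*} [MetricSpace X]
    [MeasurableSpace X] [BorelSpace X]
    (T : X ≃ₜ X) (μ : Measure X) [IsProbabilityMeasure μ]
    (hTμ : Measure.map T μ = μ)
    (huniq : ∀ ν : Measure X, IsProbabilityMeasure ν → Measure.map T ν = ν → ν = μ)
    (hwm : Ergodic (Prod.map ⇑T ⇑T) (μ.prod μ))
    (n : ℕ) (hn : 0 < n) :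
    Measure.map (⇑T)^[n] μ = μ ∧
      ∀ ν : Measure X, IsProbabilityMeasure ν → Measure.map (⇑T)^[n] ν = ν → ν = μ := by
  have hT : Measurable T := T.measurable
  have hTn : MeasurePreserving T^[n] μ μ := MeasurePreserving.iterate ⟨hT, hTμ⟩ n
  have herg : Ergodic T^[n] μ := ⟨hTn, hwm.toPreErgodic.iterate_of_prodMap hT hn⟩
  refine ⟨hTn.map_eq, fun ν hν hνn => ?_⟩
  exact herg.eq_of_absolutelyContinuous ⟨hT.iterate n, hνn⟩
    (absolutelyContinuous_of_map_iterate_eq hT huniq hn hνn)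

/-- Let `(X, T)` be a topological dynamical system on a compact metric space, uniquely ergodic
with unique invariant Borel probability measure `μ`, and suppose `(X, μ, T)` is weakly mixing
(i.e. `T × T` is ergodic for `μ × μ`). Then for every `n ∈ ℕ` (with `n ≥ 1`), the system
`(X, Tⁿ)` is also uniquely ergodic, with the same unique invariant measure `μ`. -/
theorem uniquelyErgodic_iterate {X : Type*} [MetricSpace X] [CompactSpace X]
    [MeasurableSpace X] [BorelSpace X]
    (T : X ≃ₜ X) (μ : Measure X) [IsProbabilityMeasure μ]
    (hTμ : Measure.map T μ = μ)
    (huniq : ∀ ν : Measure X, IsProbabilityMeasure ν → Measure.map T ν = ν → ν = μ)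
    (hwm : Ergodic (Prod.map ⇑T ⇑T) (μ.prod μ))
    (n : ℕ) (hn : 0 < n) :
    Measure.map (⇑T)^[n] μ = μ ∧
      ∀ ν : Measure X, IsProbabilityMeasure ν → Measure.map (⇑T)^[n] ν = ν → ν = μ :=
  uniquelyErgodic_iterate_general T μ hTμ huniq hwm n hn
end

section
/- Let (X, 𝒳, μ, T) be a weakly mixing invertible measure-preserving transformation such that the topological system (X, T) on a compact metric space is uniquely ergodic with unique invariant measure μ, let d ∈ ℕ, and set σ_d = T × T² × ⋯ × T^d on X^d. For any x ∈ X, every weak* limit point λ of the sequence of empirical measures (1/N) ∑_{n=0}^{N−1} σ_dⁿ δ_{(x,…,x)} is a joining of the systems (X, 𝒳, μ, T), (X, 𝒳, μ, T²), …, (X, 𝒳, μ, T^d); that is, λ is invariant under σ_d and its marginal on each coordinate equals μ. -/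
open MeasureTheory Filter
open scoped ENNReal Topology

/-!
Invariance of a limit point holds because the Birkhoff averages of a continuous function along
the orbits of `z` and of `σ z` differ by `O(1/N)`. The `i`-th marginal is then
`T^(i+1)`-invariant, and every `T^m`-invariant probability measure `ν` equals `μ`: with
`ν_j = T^j_* ν`, the averages `(1/m) ∑ ν_j` and `(1/m) ∑ ν_j ⊗ ν_j` are invariant under `T`,
resp. `T × T`, and absolutely continuous, so unique ergodicity and ergodicity of `T × T` identify
them with `μ` and `μ ⊗ μ`. Hence for every measurable `s` the numbers `ν_j(s)` have mean `μ(s)`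
and variance zero.
-/

lemma eq_of_sum_eq_of_sum_sq_eq {ι : Type*} (s : Finset ι) (a : ι → ℝ) (c : ℝ)
    (h₁ : ∑ i ∈ s, a i = s.card * c) (h₂ : ∑ i ∈ s, a i ^ 2 = s.card * c ^ 2)
    {i : ι} (hi : i ∈ s) : a i = c := by
  have hvar : ∑ j ∈ s, (a j - c) ^ 2 = 0 := by
    simp only [sub_sq, Finset.sum_add_distrib, Finset.sum_sub_distrib, ← Finset.sum_mul,
      ← Finset.mul_sum, Finset.sum_const, nsmul_eq_mul, h₁, h₂]
    ring
  have := (Finset.sum_eq_zero_iff_of_nonneg fun j _ => sq_nonneg (a j - c)).mp hvar i hi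
  exact sub_eq_zero.mp (pow_eq_zero_iff two_ne_zero |>.mp this)

section OrbitAverage

variable {Y : Type*} [MeasurableSpace Y] {S : Y → Y} {m : ℕ} {ν : Measure Y}

noncomputable def orbitAverage (S : Y → Y) (m : ℕ) (ν : Measure Y) : Measure Y :=
  (m : ℝ≥0∞)⁻¹ • ∑ j ∈ Finset.range m, ν.map S^[j]

lemma isProbabilityMeasure_orbitAverage (hS : Measurable S) (hm : m ≠ 0)
    [IsProbabilityMeasure ν] : IsProbabilityMeasure (orbitAverage S m ν) := by
  constructor
  have : ∀ j, IsProbabilityMeasure (ν.map S^[j]) :=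
    fun j => Measure.isProbabilityMeasure_map (hS.iterate j).aemeasurable
  simp [orbitAverage, Measure.finsetSum_apply, ENNReal.inv_mul_cancel, hm]

lemma map_orbitAverage (hS : Measurable S) [IsFiniteMeasure ν] (hν : ν.map S^[m] = ν) :
    (orbitAverage S m ν).map S = orbitAverage S m ν := by
  have hshift : ∑ j ∈ Finset.range m, ν.map S^[j + 1] = ∑ j ∈ Finset.range m, ν.map S^[j] := by
    ext s _
    have h := congrArg (· s) ((Finset.sum_range_succ' (fun j => ν.map S^[j]) m).symm.trans
      (Finset.sum_range_succ (fun j => ν.map S^[j]) m))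
    simp only [Measure.coe_add, Pi.add_apply, Function.iterate_zero, Measure.map_id, hν] at h
    exact (ENNReal.add_left_inj (measure_ne_top ν s)).mp h
  rw [orbitAverage, Measure.map_smul, ← Measure.mapₗ_apply_of_measurable hS, map_sum]
  simp only [Measure.mapₗ_apply_of_measurable hS,
    Measure.map_map hS (hS.iterate _), ← Function.iterate_succ']
  rw [hshift]

lemma map_iterate_absolutelyContinuous_orbitAverage {j : ℕ} (hj : j < m) :
    ν.map S^[j] ≪ orbitAverage S m ν := by
  refine Measure.AbsolutelyContinuous.smul_right
    (Measure.absolutelyContinuous_of_le ?_) (ENNReal.inv_ne_zero.mpr (ENNReal.natCast_ne_top m))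
  exact Finset.single_le_sum (f := fun j => ν.map S^[j]) (fun _ _ => Measure.zero_le _)
    (Finset.mem_range.mpr hj)

lemma orbitAverage_absolutelyContinuous {ρ : Measure Y} (h : ∀ j < m, ν.map S^[j] ≪ ρ) :
    orbitAverage S m ν ≪ ρ := by
  refine Measure.AbsolutelyContinuous.mk fun s _ hs => ?_
  simp only [orbitAverage, Measure.smul_apply, Measure.finsetSum_apply, smul_eq_mul]
  rw [Finset.sum_eq_zero fun j hj => h j (Finset.mem_range.mp hj) hs, mul_zero]

lemma orbitAverage_real_apply [IsFiniteMeasure ν] (s : Set Y) :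
    (orbitAverage S m ν).real s = (m : ℝ)⁻¹ * ∑ j ∈ Finset.range m, (ν.map S^[j]).real s := by
  simp [orbitAverage, Measure.real, Measure.finsetSum_apply, ENNReal.toReal_sum]

end OrbitAverage

lemma map_prodMap_iterate_prod {Y Y' : Type*} [MeasurableSpace Y] [MeasurableSpace Y']
    {S : Y → Y} {S' : Y' → Y'} (hS : Measurable S) (hS' : Measurable S')
    (ν : Measure Y) (ν' : Measure Y') [SFinite ν] [SFinite ν'] (j : ℕ) :
    (ν.prod ν').map (Prod.map S S')^[j] = (ν.map S^[j]).prod (ν'.map S'^[j]) := by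
  rw [Prod.map_iterate, Measure.map_prod_map _ _ (hS.iterate j) (hS'.iterate j)]

theorem eq_of_map_iterate_eq {Y : Type*} [MeasurableSpace Y] {S : Y → Y} (hS : Measurable S)
    {μ : Measure Y} [IsProbabilityMeasure μ]
    (huniq : ∀ ρ : Measure Y, IsProbabilityMeasure ρ → ρ.map S = ρ → ρ = μ)
    (hwm : Ergodic (Prod.map S S) (μ.prod μ)) {m : ℕ} (hm : m ≠ 0)
    {ν : Measure Y} [IsProbabilityMeasure ν] (hν : ν.map S^[m] = ν) : ν = μ := by
  have hSS : Measurable (Prod.map S S) := hS.prodMap hS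
  have hμ : orbitAverage S m ν = μ :=
    huniq _ (isProbabilityMeasure_orbitAverage hS hm) (map_orbitAverage hS hν)
  have hνν : (ν.prod ν).map (Prod.map S S)^[m] = ν.prod ν := by
    rw [map_prodMap_iterate_prod hS hS, hν]
  have hμμ : orbitAverage (Prod.map S S) m (ν.prod ν) = μ.prod μ := by
    have := isProbabilityMeasure_orbitAverage hSS hm (ν := ν.prod ν)
    refine hwm.eq_of_absolutelyContinuous ⟨hSS, map_orbitAverage hSS hνν⟩
      (orbitAverage_absolutelyContinuous fun j hj => ?_)
    have hj : ν.map S^[j] ≪ μ := hμ ▸ map_iterate_absolutelyContinuous_orbitAverage hj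
    rw [map_prodMap_iterate_prod hS hS]
    exact hj.prod hj
  ext s hs
  rw [← measureReal_eq_measureReal_iff (measure_ne_top ν s) (measure_ne_top μ s)]
  have hsum : ∑ j ∈ Finset.range m, (ν.map S^[j]).real s = m * μ.real s := by
    rw [← hμ, orbitAverage_real_apply, mul_inv_cancel_left₀ (Nat.cast_ne_zero.mpr hm)]
  have hsum_sq : ∑ j ∈ Finset.range m, (ν.map S^[j]).real s ^ 2 = m * μ.real s ^ 2 := by
    rw [sq (μ.real s), ← measureReal_prod_prod, ← hμμ, orbitAverage_real_apply,
      mul_inv_cancel_left₀ (Nat.cast_ne_zero.mpr hm)]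
    simp only [map_prodMap_iterate_prod hS hS, measureReal_prod_prod, sq]
  have := eq_of_sum_eq_of_sum_sq_eq _ (fun j => (ν.map S^[j]).real s) (μ.real s)
    (by simpa using hsum) (by simpa using hsum_sq) (Finset.mem_range.mpr (Nat.pos_of_ne_zero hm))
  simpa using this

lemma ext_of_forall_integral_continuousMap_eq {Z : Type*} [TopologicalSpace Z] [CompactSpace Z]
    [HasOuterApproxClosed Z] [MeasurableSpace Z] [BorelSpace Z] {μ ν : Measure Z}
    [IsFiniteMeasure μ] [IsFiniteMeasure ν] (h : ∀ f : C(Z, ℝ), ∫ z, f z ∂μ = ∫ z, f z ∂ν) :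
    μ = ν :=
  ext_of_forall_integral_eq_of_IsFiniteMeasure fun f => h f.toContinuousMap

lemma birkhoffAverage_comp_apply {α R M : Type*} [DivisionSemiring R] [AddCommMonoid M]
    [Module R M] (f : α → α) (g : α → M) (n : ℕ) (x : α) :
    birkhoffAverage R f (g ∘ f) n x = birkhoffAverage R f g n (f x) := by
  simp only [birkhoffAverage, birkhoffSum, Function.comp_apply, ← Function.iterate_succ_apply,
    Function.iterate_succ_apply']

lemma map_eq_of_tendsto_birkhoffAverage {Z : Type*} [TopologicalSpace Z] [CompactSpace Z]
    [HasOuterApproxClosed Z] [MeasurableSpace Z] [BorelSpace Z] {σ : Z → Z} (hσ : Continuous σ)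
    (z : Z) {φ : ℕ → ℕ} (hφ : Tendsto φ atTop atTop) {lam : Measure Z} [IsFiniteMeasure lam]
    (h : ∀ f : C(Z, ℝ), Tendsto (fun N => birkhoffAverage ℝ σ f (φ N) z) atTop
      (𝓝 (∫ y, f y ∂lam))) :
    lam.map σ = lam := by
  refine ext_of_forall_integral_continuousMap_eq fun f => ?_
  rw [integral_map hσ.aemeasurable f.continuous.aestronglyMeasurable]
  have hf : Tendsto (fun N => birkhoffAverage ℝ σ f (φ N) (σ z)) atTop (𝓝 (∫ y, f y ∂lam)) := by
    have hdiff := (tendsto_birkhoffAverage_apply_sub_birkhoffAverage' ℝ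
      (isCompact_range f.continuous).isBounded σ z).comp hφ
    simpa using (h f).add hdiff
  refine tendsto_nhds_unique ?_ hf
  simpa [birkhoffAverage_comp_apply] using h (f.comp ⟨σ, hσ⟩)

lemma map_map_eval_of_map_piMap_eq {ι α : Type*} [MeasurableSpace α] {S : ι → α → α}
    (hS : ∀ i, Measurable (S i)) {lam : Measure (ι → α)} (h : lam.map (Pi.map S) = lam) (i : ι) :
    (lam.map (Function.eval i)).map (S i) = lam.map (Function.eval i) := by
  have hPi : Measurable (Pi.map S) :=
    measurable_pi_lambda _ fun j => (hS j).comp (measurable_pi_apply j)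
  conv_rhs => rw [← h]
  rw [Measure.map_map (hS i) (measurable_pi_apply i), Measure.map_map (measurable_pi_apply i) hPi]
  rfl

theorem weak_limit_point_is_joining_general {X : Type*} [MetricSpace X] [CompactSpace X]
    [MeasurableSpace X] [BorelSpace X]
    (T : X ≃ₜ X) (μ : Measure X) [IsProbabilityMeasure μ]
    (huniq : ∀ ν : Measure X, IsProbabilityMeasure ν → Measure.map T ν = ν → ν = μ)
    (hwm : Ergodic (Prod.map ⇑T ⇑T) (μ.prod μ))
    (d : ℕ) (x : X)
    (lam : Measure (Fin d → X)) [IsProbabilityMeasure lam]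
    (hlim : ∃ φ : ℕ → ℕ, StrictMono φ ∧ ∀ f : C((Fin d → X), ℝ),
      Tendsto
        (fun N : ℕ => (φ N : ℝ)⁻¹ *
          ∑ n ∈ Finset.range (φ N), f (fun i => (⇑T)^[(i.val + 1) * n] x))
        atTop (nhds (∫ y, f y ∂lam))) :
    Measure.map (fun y (i : Fin d) => (⇑T)^[i.val + 1] (y i)) lam = lam ∧
      ∀ i : Fin d, Measure.map (fun y => y i) lam = μ := by
  obtain ⟨φ, hφ, hconv⟩ := hlim
  have hσ : Continuous (Pi.map fun i : Fin d => (⇑T)^[i.val + 1]) :=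
    continuous_pi fun i => (T.continuous.iterate _).comp (continuous_apply i)
  have hinv : lam.map (Pi.map fun i : Fin d => (⇑T)^[i.val + 1]) = lam := by
    refine map_eq_of_tendsto_birkhoffAverage hσ (fun _ => x) hφ.tendsto_atTop fun f => ?_
    refine (hconv f).congr fun N => ?_
    simp only [birkhoffAverage, birkhoffSum, Pi.map_iterate, smul_eq_mul, Function.iterate_mul]
    rfl
  refine ⟨hinv, fun i => ?_⟩
  have := Measure.isProbabilityMeasure_map (μ := lam) (measurable_pi_apply i).aemeasurable
  exact eq_of_map_iterate_eq T.measurable huniq hwm i.val.succ_ne_zero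
    (map_map_eval_of_map_piMap_eq (fun j => T.measurable.iterate _) hinv i)

/-- Let `(X, 𝒳, μ, T)` be a weakly mixing invertible measure-preserving transformation with
`(X, T)` uniquely ergodic on a compact metric space, `d ∈ ℕ`, and `σ_d = T × T² × ⋯ × T^d` on
`X^d`. For any `x ∈ X`, every weak* limit point `lam` of the empirical measures
`(1/N) ∑_{n=0}^{N-1} σ_dⁿ δ_{(x,…,x)}` (i.e. a probability measure which is a limit along a
subsequence, tested against continuous functions) is a joining of the systems
`(X, μ, T), (X, μ, T²), …, (X, μ, T^d)`: it is `σ_d`-invariant and each of its one-dimensional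
marginals equals `μ`. -/
theorem weak_limit_point_is_joining {X : Type*} [MetricSpace X] [CompactSpace X]
    [MeasurableSpace X] [BorelSpace X]
    (T : X ≃ₜ X) (μ : Measure X) [IsProbabilityMeasure μ]
    (hT : MeasurePreserving ⇑T μ μ)
    (huniq : ∀ ν : Measure X, IsProbabilityMeasure ν → Measure.map T ν = ν → ν = μ)
    (hwm : Ergodic (Prod.map ⇑T ⇑T) (μ.prod μ))
    (d : ℕ) (x : X)
    (lam : Measure (Fin d → X)) [IsProbabilityMeasure lam]
    (hlim : ∃ φ : ℕ → ℕ, StrictMono φ ∧ ∀ f : C((Fin d → X), ℝ),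
      Tendsto
        (fun N : ℕ => (φ N : ℝ)⁻¹ *
          ∑ n ∈ Finset.range (φ N), f (fun i => (⇑T)^[(i.val + 1) * n] x))
        atTop (nhds (∫ y, f y ∂lam))) :
    Measure.map (fun y (i : Fin d) => (⇑T)^[i.val + 1] (y i)) lam = lam ∧
      ∀ i : Fin d, Measure.map (fun y => y i) lam = μ :=
  weak_limit_point_is_joining_general T μ huniq hwm d x lam hlim
end
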